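/- If (v,z) belongs to the auxiliary feasible set Ξ', then the exact design κ(v,z) belongs to the LAS-constrained set Ξ_N(a,c,b). -/
import Mathlib

open Matrix

/-- Support indicator of an exact design. -/
def suppInd {n : ℕ} (w : Fin n → ℕ) : Fin n → ℕ := fun i => if 0 < w i then 1 else 0

/-- The LAS-constrained set of exact designs of size `N`. -/
def XiLAS (n K N : ℕ) (a c : Fin n → Fin K → ℝ) (b : Fin K → ℝ) : Set (Fin n → ℕ) :=
  {w | (∀ k, (∑ i, a i k * (w i : ℝ)) + (∑ i, c i k * (suppInd w i : ℝ)) ≤ b k) ∧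
       (∑ i, w i) = N}

/-- The auxiliary feasible set of auxiliary designs `(v, z)`. -/
def AuxFeas (n K N r : ℕ) (j₀ : Fin r) (a c : Fin n → Fin K → ℝ) (b : Fin K → ℝ) :
    Set ((Fin n × Fin r → ℕ) × (Fin n → ℕ)) :=
  {vz | (∀ i j, vz.1 (i, j) = vz.1 (i, j₀)) ∧
        (∀ i, vz.2 i ≤ 1) ∧
        (∀ i, vz.2 i ≤ vz.1 (i, j₀) ∧ vz.1 (i, j₀) ≤ N * vz.2 i) ∧
        (∀ k, (∑ i, a i k * (vz.1 (i, j₀) : ℝ)) + (∑ i, c i k * (vz.2 i : ℝ)) ≤ b k) ∧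
        (∑ i, vz.1 (i, j₀)) = N}

/-- The conversion map from auxiliary designs to exact designs. -/
def kappa {n r : ℕ} (j₀ : Fin r) (vz : (Fin n × Fin r → ℕ) × (Fin n → ℕ)) : Fin n → ℕ :=
  fun i => vz.1 (i, j₀)

/-- `κ` maps the auxiliary feasible set into the LAS-constrained set. -/
theorem kappa_mem_XiLAS (n K N r : ℕ) (hr : 1 ≤ r) (j₀ : Fin r)
    (a c : Fin n → Fin K → ℝ) (b : Fin K → ℝ)
    (vz : (Fin n × Fin r → ℕ) × (Fin n → ℕ))
    (hvz : vz ∈ AuxFeas n K N r j₀ a c b) :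
    kappa j₀ vz ∈ XiLAS n K N a c b := by
  obtain ⟨_, hz1, hzz, hk, hsum⟩ := hvz
  have hsupp : ∀ i, suppInd (kappa j₀ vz) i = vz.2 i := by
    intro i
    unfold suppInd kappa
    rcases Nat.lt_or_ge 0 (vz.1 (i, j₀)) with h | h
    · simp only [h, if_true]
      have h2 := (hzz i).2
      have h1 : vz.2 i = 1 := by
        rcases Nat.eq_zero_or_pos (vz.2 i) with h0 | hp
        · rw [h0, Nat.mul_zero] at h2; omega
        · have := hz1 i; omega
      omega
    · have hv0 : vz.1 (i, j₀) = 0 := by omega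
      have := (hzz i).1
      simp [hv0]
      omega
  constructor
  · intro k
    calc (∑ i, a i k * ((kappa j₀ vz) i : ℝ)) + (∑ i, c i k * (suppInd (kappa j₀ vz) i : ℝ))
        = (∑ i, a i k * (vz.1 (i, j₀) : ℝ)) + (∑ i, c i k * (vz.2 i : ℝ)) := by
          simp [kappa, hsupp]
      _ ≤ b k := hk k
  · exact hsum
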